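/- Pure types: call a unitary type A pure when ⟦A⟧ contains only pure values (equivalently ⟦♭A⟧ = ⟦A⟧). Then for all unitary types A and B: (1) the types 𝕌, ♭A and A→B are pure; (2) if A and B are pure, then so are A+B and A×B; (3) ♯A and A⇒B are not pure unless they are empty (i.e., if ⟦♯A⟧ ≠ ∅ then ♯A is not pure, and if ⟦A⇒B⟧ ≠ ∅ then A⇒B is not pure). -/

import Mathlib

namespace LinAlg

/-! ### Syntax: pure values, pure terms, term distributions -/

mutual
inductive Val : Type where
  | var : ℕ → Val
  | lam : ℕ → Distr → Val
  | star : Val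
  | pair : Val → Val → Val
  | inl : Val → Val
  | inr : Val → Val
inductive Term : Type where
  | val : Val → Term
  | app : Term → Term → Term
  | seq : Term → Distr → Term
  | letp : ℕ → ℕ → Term → Distr → Term
  | matc : Term → ℕ → Distr → ℕ → Distr → Term
inductive Distr : Type where
  | zero : Distr
  | single : Term → Distr
  | add : Distr → Distr → Distr
  | smul : ℂ → Distr → Distr
end

noncomputable instance : DecidableEq Val := fun _ _ => Classical.dec _
noncomputable instance : DecidableEq Term := fun _ _ => Classical.dec _
noncomputable instance : DecidableEq Distr := fun _ _ => Classical.dec _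

/-! ### The shallow congruence ≡ on term distributions -/

inductive Cong : Distr → Distr → Prop where
  | addZero (d : Distr) : Cong (d.add .zero) d
  | oneSmul (d : Distr) : Cong (Distr.smul 1 d) d
  | smulSmul (a b : ℂ) (d : Distr) : Cong (Distr.smul a (Distr.smul b d)) (Distr.smul (a * b) d)
  | addComm (d₁ d₂ : Distr) : Cong (d₁.add d₂) (d₂.add d₁)
  | addAssoc (d₁ d₂ d₃ : Distr) : Cong ((d₁.add d₂).add d₃) (d₁.add (d₂.add d₃))
  | smulDistrib (a b : ℂ) (d : Distr) : Cong (Distr.smul (a + b) d) ((Distr.smul a d).add (Distr.smul b d))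
  | smulAdd (a : ℂ) (d₁ d₂ : Distr) : Cong (Distr.smul a (d₁.add d₂)) ((Distr.smul a d₁).add (Distr.smul a d₂))
  | refl (d : Distr) : Cong d d
  | symm {d₁ d₂ : Distr} : Cong d₁ d₂ → Cong d₂ d₁
  | trans {d₁ d₂ d₃ : Distr} : Cong d₁ d₂ → Cong d₂ d₃ → Cong d₁ d₃
  | addCongr {d₁ d₁' d₂ d₂' : Distr} : Cong d₁ d₁' → Cong d₂ d₂' → Cong (d₁.add d₂) (d₁'.add d₂')
  | smulCongr (a : ℂ) {d d' : Distr} : Cong d d' → Cong (Distr.smul a d) (Distr.smul a d')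

/-! ### Free variables -/

mutual
def fvV : Val → Finset ℕ
  | .var y => {y}
  | .lam y b => fvD b \ {y}
  | .star => ∅
  | .pair v₁ v₂ => fvV v₁ ∪ fvV v₂
  | .inl v => fvV v
  | .inr v => fvV v
def fvT : Term → Finset ℕ
  | .val v => fvV v
  | .app s t => fvT s ∪ fvT t
  | .seq t s => fvT t ∪ fvD s
  | .letp y z t s => fvT t ∪ (fvD s \ {y, z})
  | .matc t y s₁ z s₂ => fvT t ∪ (fvD s₁ \ {y}) ∪ (fvD s₂ \ {z})
def fvD : Distr → Finset ℕ
  | .zero => ∅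
  | .single t => fvT t
  | .add d₁ d₂ => fvD d₁ ∪ fvD d₂
  | .smul _ d => fvD d
end

/-! ### Pure substitution -/

mutual
def substV (x : ℕ) (w : Val) : Val → Val
  | .var y => if y = x then w else .var y
  | .lam y b => if y = x then .lam y b else .lam y (substD x w b)
  | .star => .star
  | .pair v₁ v₂ => .pair (substV x w v₁) (substV x w v₂)
  | .inl v => .inl (substV x w v)
  | .inr v => .inr (substV x w v)
def substT (x : ℕ) (w : Val) : Term → Term
  | .val v => .val (substV x w v)
  | .app s t => .app (substT x w s) (substT x w t)
  | .seq t s => .seq (substT x w t) (substD x w s)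
  | .letp y z t s =>
      .letp y z (substT x w t) (if y = x ∨ z = x then s else substD x w s)
  | .matc t y s₁ z s₂ =>
      .matc (substT x w t) y (if y = x then s₁ else substD x w s₁)
        z (if z = x then s₂ else substD x w s₂)
def substD (x : ℕ) (w : Val) : Distr → Distr
  | .zero => .zero
  | .single t => .single (substT x w t)
  | .add d₁ d₂ => .add (substD x w d₁) (substD x w d₂)
  | .smul a d => .smul a (substD x w d)
end

/-! ### Linear extensions of the syntactic constructs -/

def appTD (s : Term) : Distr → Distr
  | .zero => .zero
  | .single t => .single (.app s t)
  | .add d₁ d₂ => .add (appTD s d₁) (appTD s d₂)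
  | .smul a d => .smul a (appTD s d)

def appDV : Distr → Val → Distr
  | .zero, _ => .zero
  | .single t, v => .single (.app t (.val v))
  | .add d₁ d₂, v => .add (appDV d₁ v) (appDV d₂ v)
  | .smul a d, v => .smul a (appDV d v)

def seqD : Distr → Distr → Distr
  | .zero, _ => .zero
  | .single t, s => .single (.seq t s)
  | .add d₁ d₂, s => .add (seqD d₁ s) (seqD d₂ s)
  | .smul a d, s => .smul a (seqD d s)

def letpD (x y : ℕ) : Distr → Distr → Distr
  | .zero, _ => .zero
  | .single t, s => .single (.letp x y t s)
  | .add d₁ d₂, s => .add (letpD x y d₁ s) (letpD x y d₂ s)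
  | .smul a d, s => .smul a (letpD x y d s)

def matcD : Distr → ℕ → Distr → ℕ → Distr → Distr
  | .zero, _, _, _, _ => .zero
  | .single t, y, s₁, z, s₂ => .single (.matc t y s₁ z s₂)
  | .add d₁ d₂, y, s₁, z, s₂ => .add (matcD d₁ y s₁ z s₂) (matcD d₂ y s₁ z s₂)
  | .smul a d, y, s₁, z, s₂ => .smul a (matcD d y s₁ z s₂)

/-- Bilinear application of distributions:  (Σᵢ αᵢ·tᵢ)(Σⱼ βⱼ·sⱼ) = Σᵢⱼ αᵢβⱼ·(tᵢ sⱼ). -/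
def appD : Distr → Distr → Distr
  | .zero, _ => .zero
  | .single t, w => appTD t w
  | .add d₁ d₂, w => .add (appD d₁ w) (appD d₂ w)
  | .smul a d, w => .smul a (appD d w)

/-- Bilinear substitution  d⟨x := w⃗⟩ = Σⱼ βⱼ · d[x := wⱼ]  (recursion on the value
distribution w⃗; non-value summands are junk and are sent to 0⃗). -/
def bsubst (x : ℕ) (d : Distr) : Distr → Distr
  | .zero => .zero
  | .single (.val w) => substD x w d
  | .single _ => .zero
  | .add w₁ w₂ => .add (bsubst x d w₁) (bsubst x d w₂)
  | .smul a w => .smul a (bsubst x d w)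

/-! ### Evaluation -/

inductive Atom : Term → Distr → Prop where
  | beta (x : ℕ) (b : Distr) (v : Val) :
      Atom (.app (.val (.lam x b)) (.val v)) (substD x v b)
  | seqStar (s : Distr) : Atom (.seq (.val .star) s) s
  | letPair (x y : ℕ) (v w : Val) (s : Distr) :
      Atom (.letp x y (.val (.pair v w)) s) (substD y w (substD x v s))
  | matchInl (v : Val) (y : ℕ) (s₁ : Distr) (z : ℕ) (s₂ : Distr) :
      Atom (.matc (.val (.inl v)) y s₁ z s₂) (substD y v s₁)
  | matchInr (v : Val) (y : ℕ) (s₁ : Distr) (z : ℕ) (s₂ : Distr) :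
      Atom (.matc (.val (.inr v)) y s₁ z s₂) (substD z v s₂)
  | appR (s : Term) {t : Term} {d : Distr} : Atom t d → Atom (.app s t) (appTD s d)
  | appL (v : Val) {t : Term} {d : Distr} : Atom t d → Atom (.app t (.val v)) (appDV d v)
  | seqC (s : Distr) {t : Term} {d : Distr} : Atom t d → Atom (.seq t s) (seqD d s)
  | letC (x y : ℕ) (s : Distr) {t : Term} {d : Distr} :
      Atom t d → Atom (.letp x y t s) (letpD x y d s)
  | matcC (y : ℕ) (s₁ : Distr) (z : ℕ) (s₂ : Distr) {t : Term} {d : Distr} :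
      Atom t d → Atom (.matc t y s₁ z s₂) (matcD d y s₁ z s₂)

/-- One-step evaluation:  t⃗ ≻ t⃗′. -/
def Step (d d' : Distr) : Prop :=
  ∃ (a : ℂ) (s : Term) (s' r : Distr),
    Cong d (Distr.add (.smul a (.single s)) r) ∧
    Cong d' (Distr.add (.smul a s') r) ∧ Atom s s'

/-- Evaluation  t⃗ ≻≻ t⃗′:  reflexive-transitive closure of one-step evaluation. -/
def Eval : Distr → Distr → Prop := Relation.ReflTransGen Step

/-! ### Value distributions, inner product, norm -/

def IsValT : Term → Prop
  | .val _ => True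
  | _ => False

def IsValD : Distr → Prop
  | .zero => True
  | .single t => IsValT t
  | .add d₁ d₂ => IsValD d₁ ∧ IsValD d₂
  | .smul _ d => IsValD d

/-- The set of closed value distributions. -/
def ClosedValD : Set Distr := {d | IsValD d ∧ fvD d = ∅}

/-- Total coefficient of the pure term `t` in the distribution `d`. -/
noncomputable def coeff : Distr → Term → ℂ
  | .zero, _ => 0
  | .single s, t => if s = t then 1 else 0
  | .add d₁ d₂, t => coeff d₁ t + coeff d₂ t
  | .smul a d, t => a * coeff d t

/-- The domain of a distribution (all pure terms occurring in it, even with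
coefficient 0). -/
noncomputable def domD : Distr → Finset Term
  | .zero => ∅
  | .single t => {t}
  | .add d₁ d₂ => domD d₁ ∪ domD d₂
  | .smul _ d => domD d

/-- The inner product ⟨v⃗|w⃗⟩ on value distributions. -/
noncomputable def innerD (v w : Distr) : ℂ :=
  ∑ t ∈ domD v, (starRingEnd ℂ) (coeff v t) * coeff w t

/-- The pseudo-ℓ²-norm ‖v⃗‖. -/
noncomputable def normD (v : Distr) : ℝ := Real.sqrt (innerD v v).re

/-- The unit sphere S of closed value distributions of norm 1. -/
def Sphere : Set Distr := {d | d ∈ ClosedValD ∧ normD d = 1}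

/-- Span(X): weak linear combinations of elements of X (taken modulo ≡). -/
inductive Span (X : Set Distr) : Distr → Prop where
  | mem {d : Distr} : d ∈ X → Span X d
  | zero : Span X .zero
  | add {d₁ d₂ : Distr} : Span X d₁ → Span X d₂ → Span X (d₁.add d₂)
  | smul (a : ℂ) {d : Distr} : Span X d → Span X (Distr.smul a d)
  | congr {d d' : Distr} : Span X d → Cong d d' → Span X d'

/-! ### Realizability: unitary types -/

/-- t⃗ ⊩ A :  t⃗ evaluates to some vector of ⟦A⟧. -/
def Realizes (A : Set Distr) (t : Distr) : Prop := ∃ v ∈ A, Eval t v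

/-- |A| : the set of (closed) realizers of A. -/
def realizersOf (A : Set Distr) : Set Distr := {t | fvD t = ∅ ∧ Realizes A t}

/-! ### Type constructors -/

def UnitT : Set Distr := {Distr.single (.val .star)}

/-- ♭A : the basis of A. -/
def flatT (X : Set Distr) : Set Distr :=
  {e | ∃ d ∈ X, ∃ v : Val, (Term.val v) ∈ domD d ∧ e = Distr.single (.val v)}

/-- ♯A : the unitary span of A. -/
def sharpT (X : Set Distr) : Set Distr := {d | Span X d ∧ d ∈ Sphere}

/-- Linear extension of a value constructor. -/
def mapVD (f : Val → Val) : Distr → Distr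
  | .zero => .zero
  | .single (.val v) => .single (.val (f v))
  | .single t => .single t
  | .add d₁ d₂ => .add (mapVD f d₁) (mapVD f d₂)
  | .smul a d => .smul a (mapVD f d)

def inlD : Distr → Distr := mapVD Val.inl
def inrD : Distr → Distr := mapVD Val.inr

/-- Bilinear extension of pairing. -/
def pairD : Distr → Distr → Distr
  | .zero, _ => .zero
  | .single (.val v), w => mapVD (Val.pair v) w
  | .single t, _ => .single t
  | .add d₁ d₂, w => .add (pairD d₁ w) (pairD d₂ w)
  | .smul a d, w => .smul a (pairD d w)

/-- A + B (simple sum). -/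
def plusT (A B : Set Distr) : Set Distr :=
  {d | (∃ v ∈ A, d = inlD v) ∨ (∃ w ∈ B, d = inrD w)}

/-- A × B (simple product). -/
def timesT (A B : Set Distr) : Set Distr :=
  {d | ∃ v ∈ A, ∃ w ∈ B, d = pairD v w}

/-- A → B (pure arrow). -/
def arrowT (A B : Set Distr) : Set Distr :=
  {d | ∃ (x : ℕ) (b : Distr), d = Distr.single (.val (.lam x b)) ∧ fvD d = ∅ ∧
      ∀ v ∈ A, Realizes B (bsubst x b v)}

/-- Σᵢ αᵢ · λx.t⃗ᵢ  ↦  Σᵢ αᵢ · t⃗ᵢ  (strips the λx in front of each summand). -/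
def stripLam (x : ℕ) : Distr → Distr
  | .zero => .zero
  | .single (.val (.lam y b)) => if y = x then b else .single (.val (.lam y b))
  | .single t => .single t
  | .add d₁ d₂ => .add (stripLam x d₁) (stripLam x d₂)
  | .smul a d => .smul a (stripLam x d)

/-- A ⇒ B (unitary arrow). -/
def uarrowT (A B : Set Distr) : Set Distr :=
  {d | d ∈ Sphere ∧ ∃ x : ℕ,
      (∀ t ∈ domD d, ∃ b : Distr, t = Term.val (.lam x b)) ∧
      ∀ v ∈ A, Realizes B (bsubst x (stripLam x d) v)}

/-! ### Booleans -/

def ttD : Distr := .single (.val (.inl .star))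
def ffD : Distr := .single (.val (.inr .star))

/-- 𝔹 = 𝕌 + 𝕌. -/
def BoolT : Set Distr := plusT UnitT UnitT

/-- ♯𝔹, the type of unitary Booleans. -/
def sharpBool : Set Distr := sharpT BoolT

/-- Boolean projection π : Span({tt,ff}) → ℂ². -/
noncomputable def piB (d : Distr) : ℂ × ℂ :=
  (coeff d (.val (.inl .star)), coeff d (.val (.inr .star)))

/-- t⃗ represents the operator F : ℂ² → ℂ². -/
def Represents (td : Distr) (F : ℂ × ℂ → ℂ × ℂ) : Prop :=
  ∀ v, Span BoolT v → ∃ w, Span BoolT w ∧ Eval (appD td v) w ∧ piB w = F (piB v)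

/-- Hermitian inner product on ℂ². -/
def hinner (u v : ℂ × ℂ) : ℂ :=
  (starRingEnd ℂ) u.1 * v.1 + (starRingEnd ℂ) u.2 * v.2

/-- A unitary operator on ℂ². -/
def IsUnitaryOp (F : ℂ × ℂ → ℂ × ℂ) : Prop :=
  ∀ u v : ℂ × ℂ, hinner (F u) (F v) = hinner u v

/-! ### Typing contexts, substitutions, judgments -/

abbrev Ctx := List (ℕ × Set Distr)
abbrev Subst := List (ℕ × Distr)

/-- Applying a substitution, one bilinear substitution at a time. -/
def applySub : Distr → Subst → Distr
  | d, [] => d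
  | d, (x, w) :: σ => applySub (bsubst x d w) σ

/-- σ ∈ ⟦Γ⟧. -/
def SubMem (σ : Subst) (Γ : Ctx) : Prop :=
  List.Forall₂ (fun p q => p.1 = q.1 ∧ p.2 ∈ q.2) σ Γ

def ctxDom (Γ : Ctx) : Set ℕ := {x | ∃ A, (x, A) ∈ Γ}

/-- dom♯(Γ): the variables of Γ whose type is not a pure-value type. -/
def ctxDomSharp (Γ : Ctx) : Set ℕ := {x | ∃ A, (x, A) ∈ Γ ∧ flatT A ≠ A}

/-- All the types of the context are unitary types (subsets of the sphere). -/
def CtxUnitary (Γ : Ctx) : Prop := ∀ p ∈ Γ, p.2 ⊆ Sphere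

/-- Validity of the typing judgment  Γ ⊢ t⃗ : A. -/
def ValidJ (Γ : Ctx) (t : Distr) (A : Set Distr) : Prop :=
  ctxDomSharp Γ ⊆ (fvD t : Set ℕ) ∧ (fvD t : Set ℕ) ⊆ ctxDom Γ ∧
  ∀ σ : Subst, SubMem σ Γ → Realizes A (applySub t σ)

/-- Validity of the orthogonality judgment  Γ | Δ₁ ⊢ t⃗₁ ⊥ Δ₂ ⊢ t⃗₂ : A. -/
def OrthoJ (Γ Δ₁ Δ₂ : Ctx) (t₁ t₂ : Distr) (A : Set Distr) : Prop :=
  ValidJ (Γ ++ Δ₁) t₁ A ∧ ValidJ (Γ ++ Δ₂) t₂ A ∧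
  ∀ σ σ₁ σ₂ : Subst, SubMem σ Γ → SubMem σ₁ Δ₁ → SubMem σ₂ Δ₂ →
    ∀ v₁ v₂ : Distr, v₁ ∈ ClosedValD → v₂ ∈ ClosedValD →
      Eval (applySub t₁ (σ ++ σ₁)) v₁ → Eval (applySub t₂ (σ ++ σ₂)) v₂ →
      innerD v₁ v₂ = 0

end LinAlg

namespace LinAlg

/-- A unitary type is pure when all its vectors are (congruent to) pure values. -/
def IsPureType (A : Set Distr) : Prop :=
  ∀ d ∈ A, ∃ v : Val, Cong d (Distr.single (.val v))

/-!
Pure values are preserved by every constructor involved in `𝕌`, `♭A`, `A → B`, `A + B` and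
`A × B`, and these constructors act linearly, hence respect `≡`. Conversely, `≡` preserves the
domain and the coefficients of a distribution, so a member of a pure type has a one-element
domain with coefficient `1`. A nonempty `♯A` is closed under multiplication by `i`, which breaks
the coefficient. A member of `A ⇒ B` with body `b` yields `λx.(⋆;b) + 0·λx.b`, which has norm `1`
and a two-element domain, and whose instances reduce in one `⋆;` step to the instances of `b`:
the contracted redex merges with the zero-weight copy of `b`.
-/

namespace Cong

theorem coeff_eq {d e : Distr} (h : Cong d e) (t : Term) : coeff d t = coeff e t := by
  induction h generalizing t <;> simp_all [coeff] <;> ring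

theorem domD_eq {d e : Distr} (h : Cong d e) : domD d = domD e := by
  induction h <;> simp_all [domD, Finset.union_comm, Finset.union_left_comm]

theorem map {g : Distr → Distr} (h0 : g .zero = .zero)
    (hadd : ∀ d e, g (d.add e) = (g d).add (g e))
    (hsmul : ∀ (a : ℂ) d, g (Distr.smul a d) = Distr.smul a (g d)) {d e : Distr} (h : Cong d e) :
    Cong (g d) (g e) := by
  induction h with
  | addZero => rw [hadd, h0]; exact .addZero _
  | oneSmul => rw [hsmul]; exact .oneSmul _
  | smulSmul => simp only [hsmul]; exact .smulSmul _ _ _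
  | addComm => simp only [hadd]; exact .addComm _ _
  | addAssoc => simp only [hadd]; exact .addAssoc _ _ _
  | smulDistrib => simp only [hsmul, hadd]; exact .smulDistrib _ _ _
  | smulAdd => simp only [hsmul, hadd]; exact .smulAdd _ _ _
  | refl => exact .refl _
  | symm _ ih => exact ih.symm
  | trans _ _ ih₁ ih₂ => exact ih₁.trans ih₂
  | addCongr _ _ ih₁ ih₂ => simp only [hadd]; exact .addCongr ih₁ ih₂
  | smulCongr _ _ ih => simp only [hsmul]; exact .smulCongr _ ih

theorem mapVD (f : Val → Val) {d e : Distr} (h : Cong d e) : Cong (mapVD f d) (mapVD f e) :=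
  h.map (by simp [LinAlg.mapVD]) (by simp [LinAlg.mapVD]) (by simp [LinAlg.mapVD])

theorem pairD_left (w : Distr) {d e : Distr} (h : Cong d e) : Cong (pairD d w) (pairD e w) :=
  h.map (g := (pairD · w)) (by simp [pairD]) (by simp [pairD]) (by simp [pairD])

theorem not_single_of_mem_domD {d : Distr} {t₁ t₂ s : Term} (h₁ : t₁ ∈ domD d)
    (h₂ : t₂ ∈ domD d) (hne : t₁ ≠ t₂) : ¬ Cong d (.single s) := by
  intro h
  rw [h.domD_eq, domD, Finset.mem_singleton] at h₁ h₂
  exact hne (h₁.trans h₂.symm)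

theorem eq_one_of_smul {d : Distr} {c : ℂ} {t s : Term} (h : Cong d (.single t))
    (hc : Cong (Distr.smul c d) (.single s)) : c = 1 := by
  have key := hc.coeff_eq s
  simp only [coeff, h.coeff_eq s] at key
  split_ifs at key <;> simp_all

end Cong

namespace Step

theorem of_cong {d₁ d₂ e₁ e₂ : Distr} (hd : Cong d₁ d₂) (he : Cong e₁ e₂) (h : Step d₂ e₂) :
    Step d₁ e₁ := by
  obtain ⟨a, s, s', r, hs, hs', ha⟩ := h
  exact ⟨a, s, s', r, hd.trans hs, he.trans hs', ha⟩

theorem add_right {d e : Distr} (h : Step d e) (r : Distr) : Step (d.add r) (e.add r) := by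
  obtain ⟨a, s, s', r₀, hs, hs', ha⟩ := h
  exact ⟨a, s, s', r₀.add r, (Cong.addCongr hs (.refl r)).trans (.addAssoc _ _ _),
    (Cong.addCongr hs' (.refl r)).trans (.addAssoc _ _ _), ha⟩

theorem add_left {d e : Distr} (h : Step d e) (r : Distr) : Step (r.add d) (r.add e) :=
  (h.add_right r).of_cong (.addComm _ _) (.addComm _ _)

theorem smul {d e : Distr} (h : Step d e) (c : ℂ) : Step (Distr.smul c d) (Distr.smul c e) := by
  obtain ⟨a, s, s', r₀, hs, hs', ha⟩ := h
  have distrib : ∀ t : Distr, Cong (Distr.smul c ((Distr.smul a t).add r₀))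
      ((Distr.smul (c * a) t).add (Distr.smul c r₀)) :=
    fun t => (Cong.smulAdd _ _ _).trans (.addCongr (.smulSmul _ _ _) (.refl _))
  exact ⟨c * a, s, s', Distr.smul c r₀, (Cong.smulCongr c hs).trans (distrib _),
    (Cong.smulCongr c hs').trans (distrib _), ha⟩

theorem seq_star_add_zero_smul (u : Distr) :
    Step ((Distr.single (.seq (.val .star) u)).add (Distr.smul 0 u)) u := by
  refine ⟨1, _, u, Distr.smul 0 u, .addCongr (.symm (.oneSmul _)) (.refl _), ?_, .seqStar u⟩
  have h := Cong.smulDistrib 1 0 u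
  rw [add_zero] at h
  exact (Cong.oneSmul u).symm.trans h

end Step

namespace Eval

theorem add {d d' e e' : Distr} (hd : Eval d d') (he : Eval e e') :
    Eval (d.add e) (d'.add e') :=
  (hd.lift (fun x : Distr => x.add e) fun _ _ h => h.add_right e).trans
    (he.lift (fun x : Distr => d'.add x) fun _ _ h => h.add_left d')

theorem smul {d d' : Distr} (h : Eval d d') (c : ℂ) : Eval (Distr.smul c d) (Distr.smul c d') :=
  h.lift (fun x : Distr => Distr.smul c x) fun _ _ h => h.smul c

theorem bsubst (x : ℕ) {D D' : Distr} (h : ∀ w, Eval (substD x w D) (substD x w D')) :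
    ∀ v, Eval (bsubst x D v) (bsubst x D' v)
  | .zero => .refl
  | .single (.val w) => h w
  | .single (.app _ _) | .single (.seq _ _) | .single (.letp _ _ _ _)
  | .single (.matc _ _ _ _ _) => .refl
  | .add v₁ v₂ => (Eval.bsubst x h v₁).add (Eval.bsubst x h v₂)
  | .smul c v => (Eval.bsubst x h v).smul c

end Eval

theorem Realizes.of_eval {B : Set Distr} {t t' : Distr} (h : Eval t t') (ht' : Realizes B t') :
    Realizes B t := by
  obtain ⟨v, hv, hev⟩ := ht'
  exact ⟨v, hv, h.trans hev⟩

theorem innerD_smul_self (c : ℂ) (d : Distr) :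
    innerD (Distr.smul c d) (Distr.smul c d) = (starRingEnd ℂ) c * c * innerD d d := by
  simp only [innerD, domD, coeff, Finset.mul_sum, map_mul]
  exact Finset.sum_congr rfl fun _ _ => by ring

theorem smul_mem_sphere {c : ℂ} (hc : ‖c‖ = 1) {d : Distr} (hd : d ∈ Sphere) :
    Distr.smul c d ∈ Sphere := by
  obtain ⟨⟨hval, hfv⟩, hnorm⟩ := hd
  refine ⟨⟨hval, hfv⟩, ?_⟩
  rw [normD, innerD_smul_self, Complex.conj_mul', hc]
  simpa [normD] using hnorm

theorem normD_single_add_zero_smul (t₁ t₂ : Term) :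
    normD ((Distr.single t₁).add (Distr.smul 0 (Distr.single t₂))) = 1 := by
  by_cases h : t₁ = t₂
  · subst h
    simp [normD, innerD, domD, coeff]
  · simp [normD, innerD, domD, coeff, Finset.sum_pair h, h]

theorem fvD_stripLam_subset (x : ℕ) : ∀ d : Distr, fvD (stripLam x d) ⊆ fvD d ∪ {x}
  | .zero => by simp [stripLam, fvD]
  | .single (.val (.lam y b)) => by
    by_cases h : y = x
    · subst h
      intro a
      simp only [stripLam, if_pos, fvD, fvT, fvV, Finset.mem_union, Finset.mem_sdiff,
        Finset.mem_singleton]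
      tauto
    · simp [stripLam, h]
  | .single (.val (.var _)) | .single (.val .star) | .single (.val (.pair _ _))
  | .single (.val (.inl _)) | .single (.val (.inr _)) | .single (.app _ _)
  | .single (.seq _ _) | .single (.letp _ _ _ _) | .single (.matc _ _ _ _ _) => by
    simp [stripLam]
  | .add d₁ d₂ => by
    simp only [stripLam, fvD]
    rw [Finset.union_union_distrib_right]
    exact Finset.union_subset_union (fvD_stripLam_subset x d₁) (fvD_stripLam_subset x d₂)
  | .smul _ d => fvD_stripLam_subset x d

def paddedLam (x : ℕ) (b : Distr) : Distr :=
  (Distr.single (.val (.lam x (.single (.seq (.val .star) b))))).add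
    (Distr.smul 0 (Distr.single (.val (.lam x b))))

theorem paddedLam_mem_uarrowT {A B : Set Distr} {x : ℕ} {b : Distr} (hfv : fvD b ⊆ {x})
    (hb : ∀ v ∈ A, Realizes B (bsubst x b v)) : paddedLam x b ∈ uarrowT A B := by
  refine ⟨⟨⟨by simp [paddedLam, IsValD, IsValT], ?_⟩, normD_single_add_zero_smul _ _⟩, x, ?_, ?_⟩
  · simpa [paddedLam, fvD, fvT, fvV] using hfv
  · simp [paddedLam, domD]
  · intro v hv
    have hstrip : stripLam x (paddedLam x b) =
        (Distr.single (.seq (.val .star) b)).add (Distr.smul 0 b) := by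
      simp [paddedLam, stripLam]
    rw [hstrip]
    refine (hb v hv).of_eval (Eval.bsubst x (fun w => .single ?_) v)
    simpa [substD, substT, substV] using Step.seq_star_add_zero_smul (substD x w b)

theorem paddedLam_not_cong_single (x : ℕ) (b : Distr) (s : Term) :
    ¬ Cong (paddedLam x b) (.single s) := by
  refine Cong.not_single_of_mem_domD (t₁ := .val (.lam x (.single (.seq (.val .star) b))))
    (t₂ := .val (.lam x b)) (by simp [paddedLam, domD]) (by simp [paddedLam, domD]) fun h => ?_
  -- `b` is a proper subterm of `⋆;b`
  have := congrArg sizeOf h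
  simp only [Term.val.sizeOf_spec, Val.lam.sizeOf_spec, Distr.single.sizeOf_spec,
    Term.seq.sizeOf_spec, Val.star.sizeOf_spec] at this
  omega

theorem isPureType_unitT : IsPureType UnitT := by
  rintro d rfl
  exact ⟨.star, .refl _⟩

theorem isPureType_flatT (A : Set Distr) : IsPureType (flatT A) := by
  rintro _ ⟨_, _, v, _, rfl⟩
  exact ⟨v, .refl _⟩

theorem isPureType_arrowT (A B : Set Distr) : IsPureType (arrowT A B) := by
  rintro _ ⟨x, b, rfl, -⟩
  exact ⟨.lam x b, .refl _⟩

theorem IsPureType.plusT {A B : Set Distr} (hA : IsPureType A) (hB : IsPureType B) :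
    IsPureType (plusT A B) := by
  rintro _ (⟨v, hv, rfl⟩ | ⟨w, hw, rfl⟩)
  · obtain ⟨u, hu⟩ := hA v hv
    exact ⟨.inl u, by simpa [inlD, mapVD] using hu.mapVD Val.inl⟩
  · obtain ⟨u, hu⟩ := hB w hw
    exact ⟨.inr u, by simpa [inrD, mapVD] using hu.mapVD Val.inr⟩

theorem IsPureType.timesT {A B : Set Distr} (hA : IsPureType A) (hB : IsPureType B) :
    IsPureType (timesT A B) := by
  rintro _ ⟨v, hv, w, hw, rfl⟩
  obtain ⟨v₀, hv₀⟩ := hA v hv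
  obtain ⟨w₀, hw₀⟩ := hB w hw
  refine ⟨.pair v₀ w₀, (hv₀.pairD_left w).trans ?_⟩
  simpa [pairD, mapVD] using hw₀.mapVD (Val.pair v₀)

theorem not_isPureType_sharpT {A : Set Distr} (hne : (sharpT A).Nonempty) :
    ¬ IsPureType (sharpT A) := by
  obtain ⟨d, hspan, hd⟩ := hne
  intro hpure
  have hId : Distr.smul Complex.I d ∈ sharpT A :=
    ⟨.smul _ hspan, smul_mem_sphere (by simp) hd⟩
  obtain ⟨u, hu⟩ := hpure d ⟨hspan, hd⟩
  obtain ⟨v, hv⟩ := hpure _ hId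
  exact absurd (congrArg Complex.im (hu.eq_one_of_smul hv)) (by simp)

theorem not_isPureType_uarrowT {A B : Set Distr} (hne : (uarrowT A B).Nonempty) :
    ¬ IsPureType (uarrowT A B) := by
  obtain ⟨d, ⟨⟨-, hfv⟩, -⟩, x, -, hreal⟩ := hne
  have hfvb : fvD (stripLam x d) ⊆ {x} := by
    simpa [hfv] using fvD_stripLam_subset x d
  intro hpure
  obtain ⟨v, hv⟩ := hpure _ (paddedLam_mem_uarrowT hfvb hreal)
  exact paddedLam_not_cong_single x _ _ hv

/-- Pure types: 𝕌, ♭A and A→B are pure; sums and products of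
pure types are pure; ♯A and A⇒B are not pure unless they are empty. -/
theorem pure_types (A B : Set Distr) (hA : A ⊆ Sphere) (hB : B ⊆ Sphere) :
    (IsPureType UnitT ∧ IsPureType (flatT A) ∧ IsPureType (arrowT A B)) ∧
    (IsPureType A → IsPureType B →
      IsPureType (plusT A B) ∧ IsPureType (timesT A B)) ∧
    ((sharpT A).Nonempty → ¬ IsPureType (sharpT A)) ∧
    ((uarrowT A B).Nonempty → ¬ IsPureType (uarrowT A B)) :=
  ⟨⟨isPureType_unitT, isPureType_flatT A, isPureType_arrowT A B⟩,
    fun hpA hpB => ⟨hpA.plusT hpB, hpA.timesT hpB⟩, not_isPureType_sharpT, not_isPureType_uarrowT⟩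

end LinAlg
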